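/- Every generalized evolutionary system possesses a weak pullback attractor A_w(t), and A_w(t) = Ω_w(X,t). Moreover, if the strong pullback attractor A_s(t) exists, then the weak closure of A_s(t) equals A_w(t). -/

import Mathlib

/-!
Compactness of `(X, d_w)` makes `Ω_w(X, ·)` weakly pullback attracting: a sequence of points of
`P(t, sₙ) X` with `sₙ → -∞` that stays `ε`-far from `Ω_w(X, t)` has a weakly convergent
subsequence, whose limit lies in `Ω_w(X, t)` by definition. Conversely any weakly closed, weakly
attracting family contains `Ω_w(X, ·)`, since every point of `Ω_w(X, t)` is a weak limit of points
of `P(t, s) X` with `s` arbitrarily negative.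

For a strong attractor `A_s`, minimality against the family that agrees with `A_s` except at time
`t`, where it is replaced by `cl_s (⋃_{r ≤ s} P(t, r) X)`, gives `A_s(t) ⊆ Ω_s(X, t) ⊆ Ω_w(X, t)`.
The hypothesis relating the two metrics makes `d_s`-close pairs uniformly `d_w`-close, hence strong
attraction implies weak attraction; then `cl_w A_s` is a competitor for `Ω_w`, and minimality
gives the reverse inclusion.
-/

open Filter Topology MeasureTheory

variable {X : Type*}

/-- Convergence of a sequence with respect to a distance function `d`. -/
def Conv (d : X → X → ℝ) (u : ℕ → X) (x : X) : Prop :=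
  ∀ ε > 0, ∃ N, ∀ n ≥ N, d (u n) x < ε

/-- The `d`-distance between two paired sequences tends to zero. -/
def DistTendsZero (d : X → X → ℝ) (u v : ℕ → X) : Prop :=
  ∀ ε > 0, ∃ N, ∀ n ≥ N, d (u n) (v n) < ε

/-- Sequential closure of a set with respect to the distance `d`. -/
def SeqClosure (d : X → X → ℝ) (A : Set X) : Set X :=
  {x | ∃ u : ℕ → X, (∀ n, u n ∈ A) ∧ Conv d u x}

/-- Sequential closedness with respect to the distance `d`. -/
def SeqClosed (d : X → X → ℝ) (A : Set X) : Prop :=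
  SeqClosure d A ⊆ A

/-- Sequential compactness of a set with respect to the distance `d`. -/
def SeqCompactIn (d : X → X → ℝ) (A : Set X) : Prop :=
  ∀ u : ℕ → X, (∀ n, u n ∈ A) →
    ∃ x ∈ A, ∃ φ : ℕ → ℕ, StrictMono φ ∧ Conv d (u ∘ φ) x

/-- `d` is a metric on `X`. -/
def IsMetric (d : X → X → ℝ) : Prop :=
  (∀ x y, 0 ≤ d x y) ∧ (∀ x y, d x y = 0 ↔ x = y) ∧ (∀ x y, d x y = d y x) ∧
  (∀ x y z, d x z ≤ d x y + d y z)

/-- Uniform convergence of trajectories on each compact subinterval `[s,T]`,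
i.e. convergence in `C([s,∞);X)` with distance `d` on `X`. -/
def ConvTraj (d : X → X → ℝ) (s : ℝ) (u : ℕ → ℝ → X) (v : ℝ → X) : Prop :=
  ∀ T : ℝ, ∀ ε > 0, ∃ N, ∀ n ≥ N, ∀ r ∈ Set.Icc s T, d (u n r) (v r) < ε

/-- A generalized evolutionary system: to each interval `[s,∞)` it assigns a
nonempty set of trajectories (encoded as functions `ℝ → X`, only the values on
`[s,∞)` being relevant), closed under restriction to later starting times. -/
structure GES (X : Type*) where
  traj : ℝ → Set (ℝ → X)
  nonempty : ∀ s : ℝ, (traj s).Nonempty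
  mono : ∀ ⦃s s' : ℝ⦄, s ≤ s' → traj s ⊆ traj s'

namespace GES

variable (E : GES X)

/-- Complete trajectories: those whose restriction to every `[T,∞)` is a trajectory. -/
def complete : Set (ℝ → X) := {u | ∀ T : ℝ, u ∈ E.traj T}

/-- `P(t,s)A = {u(t) : u ∈ E([s,∞)), u(s) ∈ A}`. -/
def P (t s : ℝ) (A : Set X) : Set X :=
  {x | ∃ u ∈ E.traj s, u s ∈ A ∧ u t = x}

/-- `P̃(t,s)A = {u(t) : u ∈ E((-∞,∞)), u(s) ∈ A}`. -/
def Ptil (t s : ℝ) (A : Set X) : Set X :=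
  {x | ∃ u ∈ E.complete, u s ∈ A ∧ u t = x}

/-- The pullback omega-limit `Ω_d(A,t) = ⋂_{s≤t} cl_d(⋃_{r≤s} P(t,r)A)`. -/
def Omega (d : X → X → ℝ) (A : Set X) (t : ℝ) : Set X :=
  ⋂ s ∈ Set.Iic t, SeqClosure d (⋃ r ∈ Set.Iic s, E.P t r A)

/-- The family `Afam` pullback attracts the set `B` in the metric `d`. -/
def PullbackAttracts (d : X → X → ℝ) (Afam : ℝ → Set X) (B : Set X) : Prop :=
  ∀ t : ℝ, ∀ ε > 0, ∃ s0 ≤ t, ∀ s ≤ s0, ∀ x ∈ E.P t s B, ∃ a ∈ Afam t, d x a < ε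

/-- The `d`-pullback attractor: a family of `d`-closed, `d`-pullback attracting
sets which is minimal with respect to these properties. -/
def IsPullbackAttractor (d : X → X → ℝ) (Afam : ℝ → Set X) : Prop :=
  (∀ t, SeqClosed d (Afam t)) ∧ E.PullbackAttracts d Afam Set.univ ∧
  ∀ B : ℝ → Set X, (∀ t, SeqClosed d (B t)) → E.PullbackAttracts d B Set.univ →
    ∀ t, Afam t ⊆ B t

/-- Pullback asymptotic compactness with respect to `d`. -/
def PullbackAsympCompact (d : X → X → ℝ) : Prop :=
  ∀ t : ℝ, ∀ s : ℕ → ℝ, (∀ n, s n ≤ t) → Tendsto s atTop atBot →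
    ∀ x : ℕ → X, (∀ n, x n ∈ E.P t (s n) Set.univ) →
      ∃ y : X, ∃ φ : ℕ → ℕ, StrictMono φ ∧ Conv d (x ∘ φ) y

/-- Pullback semi-invariance. -/
def PBSemiInv (B : ℝ → Set X) : Prop :=
  ∀ ⦃s t : ℝ⦄, s ≤ t → E.Ptil t s (B s) ⊆ B t

/-- Pullback invariance. -/
def PBInv (B : ℝ → Set X) : Prop :=
  ∀ ⦃s t : ℝ⦄, s ≤ t → E.Ptil t s (B s) = B t

/-- Pullback quasi-invariance. -/
def PBQuasiInv (B : ℝ → Set X) : Prop :=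
  ∀ t : ℝ, ∀ b ∈ B t, ∃ u ∈ E.complete, u t = b ∧ ∀ s ≤ t, u s ∈ B s

/-- Condition A1: `E([s,∞))` is compact in `C([s,∞);X_w)` for each `s`. -/
def A1 (d : X → X → ℝ) : Prop :=
  ∀ s : ℝ, ∀ u : ℕ → ℝ → X, (∀ n, u n ∈ E.traj s) →
    ∃ v ∈ E.traj s, ∃ φ : ℕ → ℕ, StrictMono φ ∧ ConvTraj d s (fun n => u (φ n)) v

end GES


open Set

section Distance

variable {d : X → X → ℝ}

theorem IsMetric.dist_self (hd : IsMetric d) (x : X) : d x x = 0 := (hd.2.1 x x).2 rfl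

theorem IsMetric.dist_comm (hd : IsMetric d) (x y : X) : d x y = d y x := hd.2.2.1 x y

theorem IsMetric.dist_triangle (hd : IsMetric d) (x y z : X) : d x z ≤ d x y + d y z :=
  hd.2.2.2 x y z

theorem exists_forall_ge_lt_of_lt_one_div_succ {a : ℕ → ℝ} (ha : ∀ n : ℕ, a n < 1 / ((n : ℝ) + 1)) :
    ∀ ε > 0, ∃ N, ∀ n ≥ N, a n < ε := by
  intro ε hε
  obtain ⟨N, hN⟩ := exists_nat_one_div_lt hε
  exact ⟨N, fun n hn => ((ha n).trans_le (Nat.one_div_le_one_div hn)).trans hN⟩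

theorem mem_seqClosure_iff {A : Set X} {x : X} :
    x ∈ SeqClosure d A ↔ ∀ ε > 0, ∃ a ∈ A, d a x < ε := by
  constructor
  · rintro ⟨u, huA, hu⟩ ε hε
    obtain ⟨N, hN⟩ := hu ε hε
    exact ⟨u N, huA N, hN N le_rfl⟩
  · intro h
    choose a haA hax using fun n : ℕ => h (1 / ((n : ℝ) + 1)) (by positivity)
    exact ⟨a, haA, exists_forall_ge_lt_of_lt_one_div_succ hax⟩

theorem IsMetric.subset_seqClosure (hd : IsMetric d) (A : Set X) : A ⊆ SeqClosure d A :=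
  fun x hx => mem_seqClosure_iff.2 fun _ hε => ⟨x, hx, by rwa [hd.dist_self]⟩

theorem IsMetric.seqClosed_seqClosure (hd : IsMetric d) (A : Set X) : SeqClosed d (SeqClosure d A) := by
  intro x hx
  refine mem_seqClosure_iff.2 fun ε hε => ?_
  obtain ⟨y, hy, hyx⟩ := mem_seqClosure_iff.1 hx (ε / 2) (by positivity)
  obtain ⟨a, ha, hay⟩ := mem_seqClosure_iff.1 hy (ε / 2) (by positivity)
  exact ⟨a, ha, by linarith [hd.dist_triangle a y x]⟩

theorem SeqClosed.seqClosure_subset {A C : Set X} (hC : SeqClosed d C) (hAC : A ⊆ C) :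
    SeqClosure d A ⊆ C :=
  fun _ ⟨u, huA, hu⟩ => hC ⟨u, fun n => hAC (huA n), hu⟩

theorem seqClosed_biInter {ι : Type*} {S : Set ι} {A : ι → Set X}
    (h : ∀ i ∈ S, SeqClosed d (A i)) : SeqClosed d (⋂ i ∈ S, A i) :=
  fun _ ⟨u, huA, hu⟩ => mem_iInter₂.2 fun i hi =>
    h i hi ⟨u, fun n => mem_iInter₂.1 (huA n) i hi, hu⟩

end Distance

section StrongWeak

variable {ds dw : X → X → ℝ}

theorem seqClosure_subset_of_distTendsZero
    (H : ∀ u v : ℕ → X, DistTendsZero ds u v → DistTendsZero dw u v) (A : Set X) :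
    SeqClosure ds A ⊆ SeqClosure dw A :=
  fun x ⟨u, huA, hu⟩ => ⟨u, huA, H u (fun _ => x) hu⟩

theorem exists_pos_forall_lt_of_distTendsZero
    (H : ∀ u v : ℕ → X, DistTendsZero ds u v → DistTendsZero dw u v) {ε : ℝ} (hε : 0 < ε) :
    ∃ δ > 0, ∀ x y, ds x y < δ → dw x y < ε := by
  by_contra! hfar
  choose x y hxy hxy' using fun n : ℕ => hfar (1 / ((n : ℝ) + 1)) (by positivity)
  obtain ⟨N, hN⟩ := H x y (exists_forall_ge_lt_of_lt_one_div_succ hxy) ε hε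
  exact (hN N le_rfl).not_ge (hxy' N)

end StrongWeak

namespace GES

section Omega

variable (E : GES X) {d : X → X → ℝ}

theorem mem_omega_iff {A : Set X} {t : ℝ} {y : X} :
    y ∈ E.Omega d A t ↔ ∀ s ≤ t, y ∈ SeqClosure d (⋃ r ∈ Iic s, E.P t r A) := by
  simp only [Omega, mem_iInter₂, mem_Iic]

theorem seqClosed_omega (hd : IsMetric d) (A : Set X) (t : ℝ) : SeqClosed d (E.Omega d A t) :=
  seqClosed_biInter fun _ _ => hd.seqClosed_seqClosure _

theorem mem_omega_of_conv {A : Set X} {t : ℝ} {s : ℕ → ℝ} {x : ℕ → X} {y : X}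
    (hs : Tendsto s atTop atBot) (hx : ∀ n, x n ∈ E.P t (s n) A) (hy : Conv d x y) :
    y ∈ E.Omega d A t := by
  refine E.mem_omega_iff.2 fun s' _ => mem_seqClosure_iff.2 fun ε hε => ?_
  obtain ⟨N, hN⟩ := hy ε hε
  obtain ⟨M, hM⟩ := eventually_atTop.1 (hs.eventually (eventually_le_atBot s'))
  exact ⟨x (max N M), mem_biUnion (hM _ (le_max_right N M)) (hx _), hN _ (le_max_left N M)⟩

theorem pullbackAttracts_omega (hcompact : SeqCompactIn d univ) (A : Set X) :
    E.PullbackAttracts d (E.Omega d A) A := by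
  intro t ε hε
  by_contra! hfar
  choose s hs x hx hxfar using fun n : ℕ => hfar (t - n) (sub_le_self t n.cast_nonneg)
  obtain ⟨y, -, φ, hφ, hy⟩ := hcompact x fun _ => mem_univ _
  have hs_atBot : Tendsto s atTop atBot :=
    tendsto_atBot_mono hs (tendsto_atBot_add_const_left _ t
      (tendsto_neg_atTop_atBot.comp tendsto_natCast_atTop_atTop))
  have hyΩ : y ∈ E.Omega d A t :=
    E.mem_omega_of_conv (hs_atBot.comp hφ.tendsto_atTop) (fun n => hx (φ n)) hy
  obtain ⟨N, hN⟩ := hy ε hε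
  exact (hN N le_rfl).not_ge (hxfar (φ N) y hyΩ)

theorem omega_subset_of_pullbackAttracts (hd : IsMetric d) {A : Set X} {B : ℝ → Set X}
    (hBc : ∀ t, SeqClosed d (B t)) (hBa : E.PullbackAttracts d B A) (t : ℝ) :
    E.Omega d A t ⊆ B t := by
  intro y hy
  refine hBc t (mem_seqClosure_iff.2 fun ε hε => ?_)
  obtain ⟨s₀, hs₀t, hattr⟩ := hBa t (ε / 2) (by positivity)
  obtain ⟨x, hxP, hxy⟩ :=
    mem_seqClosure_iff.1 (E.mem_omega_iff.1 hy s₀ hs₀t) (ε / 2) (by positivity)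
  obtain ⟨r, hr, hxr⟩ := mem_iUnion₂.1 hxP
  obtain ⟨b, hb, hxb⟩ := hattr r hr x hxr
  exact ⟨b, hb, by linarith [hd.dist_triangle b x y, hd.dist_comm b x]⟩

theorem isPullbackAttractor_omega (hd : IsMetric d) (hcompact : SeqCompactIn d univ) :
    E.IsPullbackAttractor d (E.Omega d univ) :=
  ⟨E.seqClosed_omega hd univ, E.pullbackAttracts_omega hcompact univ,
    fun _ hBc hBa => E.omega_subset_of_pullbackAttracts hd hBc hBa⟩

theorem omega_subset_omega_of_distTendsZero {ds dw : X → X → ℝ}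
    (H : ∀ u v : ℕ → X, DistTendsZero ds u v → DistTendsZero dw u v) (A : Set X) (t : ℝ) :
    E.Omega ds A t ⊆ E.Omega dw A t :=
  biInter_mono subset_rfl fun _ _ => seqClosure_subset_of_distTendsZero H _

end Omega

section Attractor

variable {E : GES X} {A A' : ℝ → Set X} {B : Set X}

theorem PullbackAttracts.mono {d : X → X → ℝ} (h : E.PullbackAttracts d A B)
    (hAA' : ∀ t, A t ⊆ A' t) : E.PullbackAttracts d A' B := by
  intro t ε hε
  obtain ⟨s₀, hs₀, hattr⟩ := h t ε hε
  refine ⟨s₀, hs₀, fun s hs x hx => ?_⟩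
  obtain ⟨a, ha, hxa⟩ := hattr s hs x hx
  exact ⟨a, hAA' t ha, hxa⟩

theorem PullbackAttracts.of_distTendsZero {ds dw : X → X → ℝ}
    (H : ∀ u v : ℕ → X, DistTendsZero ds u v → DistTendsZero dw u v)
    (h : E.PullbackAttracts ds A B) : E.PullbackAttracts dw A B := by
  intro t ε hε
  obtain ⟨δ, hδ, hδε⟩ := exists_pos_forall_lt_of_distTendsZero H hε
  obtain ⟨s₀, hs₀, hattr⟩ := h t δ hδ
  refine ⟨s₀, hs₀, fun s hs x hx => ?_⟩
  obtain ⟨a, ha, hxa⟩ := hattr s hs x hx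
  exact ⟨a, ha, hδε x a hxa⟩

theorem IsPullbackAttractor.subset_omega {d : X → X → ℝ} (hd : IsMetric d)
    (hA : E.IsPullbackAttractor d A) (t : ℝ) : A t ⊆ E.Omega d univ t := by
  classical
  intro a ha
  refine E.mem_omega_iff.2 fun s hst => ?_
  set C := SeqClosure d (⋃ r ∈ Iic s, E.P t r univ)
  have hclosed : ∀ t', SeqClosed d (Function.update A t C t') := by
    intro t'
    rcases eq_or_ne t' t with rfl | ht'
    · rw [Function.update_self]
      exact hd.seqClosed_seqClosure _
    · rw [Function.update_of_ne ht']
      exact hA.1 t'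
  have hattr : E.PullbackAttracts d (Function.update A t C) univ := by
    intro t' ε hε
    rcases eq_or_ne t' t with rfl | ht'
    · refine ⟨s, hst, fun r hr x hx => ⟨x, ?_, by rwa [hd.dist_self]⟩⟩
      rw [Function.update_self]
      exact hd.subset_seqClosure _ (mem_biUnion hr hx)
    · rw [Function.update_of_ne ht']
      exact hA.2.1 t' ε hε
  simpa only [Function.update_self] using hA.2.2 _ hclosed hattr t ha

end Attractor

end GES

/-- every generalized evolutionary system has a weak pullback
attractor, namely `Ω_w(X,t)`; and if a strong pullback attractor exists, its
weak closure is the weak pullback attractor. -/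
theorem stmt7 {X : Type*} (E : GES X) (ds dw : X → X → ℝ)
    (hds : IsMetric ds) (hdw : IsMetric dw)
    (hcompact : SeqCompactIn dw (Set.univ : Set X))
    (H : ∀ u v : ℕ → X, DistTendsZero ds u v → DistTendsZero dw u v) :
    E.IsPullbackAttractor dw (fun t => E.Omega dw Set.univ t) ∧
    (∀ Afam : ℝ → Set X, E.IsPullbackAttractor ds Afam →
      ∀ t : ℝ, SeqClosure dw (Afam t) = E.Omega dw Set.univ t) := by
  have hΩ : E.IsPullbackAttractor dw (E.Omega dw univ) := E.isPullbackAttractor_omega hdw hcompact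
  refine ⟨hΩ, fun A hA t => ((hΩ.1 t).seqClosure_subset ?_).antisymm ?_⟩
  · exact (hA.subset_omega hds t).trans (E.omega_subset_omega_of_distTendsZero H univ t)
  · exact hΩ.2.2 (fun t => SeqClosure dw (A t)) (fun _ => hdw.seqClosed_seqClosure _)
      ((hA.2.1.of_distTendsZero H).mono fun _ => hdw.subset_seqClosure _) t
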